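/- If g : ℝ → ℝ is a smooth even function, then g(x) - g(0) = x²·h(x) for some smooth even function h : ℝ → ℝ. -/

import Mathlib

open Filter

private lemma hasDerivAt_param (φ : ℝ → ℝ) (hφ : ContDiff ℝ (⊤ : ℕ∞) φ) (k : ℕ) (x : ℝ) :
    HasDerivAt (fun y => ∫ t in (0:ℝ)..1, t ^ k * φ (t * y))
      (∫ t in (0:ℝ)..1, t ^ (k+1) * deriv φ (t * x)) x := by
  have hd : Differentiable ℝ φ := hφ.differentiable (by simp)
  have hcd : Continuous (deriv φ) := (contDiff_infty_iff_deriv.mp hφ).2.continuous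
  obtain ⟨C, hC⟩ := (isCompact_Icc.prod (isCompact_closedBall x 1)).exists_bound_of_continuousOn
    (f := fun p : ℝ × ℝ => p.1 ^ (k+1) * deriv φ (p.1 * p.2)) (by fun_prop)
  have := intervalIntegral.hasDerivAt_integral_of_dominated_loc_of_deriv_le
    (μ := MeasureTheory.volume)
    (a := 0) (b := 1) (F := fun y t => t ^ k * φ (t * y))
    (F' := fun y t => t ^ (k+1) * deriv φ (t * y)) (x₀ := x) (bound := fun _ => C)
    (Metric.ball_mem_nhds x one_pos)
    (Filter.Eventually.of_forall fun y =>
      (by fun_prop : Continuous fun t : ℝ => t ^ k * φ (t * y)).aestronglyMeasurable)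
    ((by fun_prop : Continuous fun t : ℝ => t ^ k * φ (t * x)).intervalIntegrable _ _)
    ((by fun_prop : Continuous fun t : ℝ => t ^ (k+1) * deriv φ (t * x)).aestronglyMeasurable)
    ?_ intervalIntegrable_const ?_
  · exact this.2
  · refine Filter.Eventually.of_forall fun t ht y hy => ?_
    rw [Set.uIoc_of_le zero_le_one] at ht
    exact hC (t, y) ⟨⟨ht.1.le, ht.2⟩, Metric.ball_subset_closedBall hy⟩
  · refine Filter.Eventually.of_forall fun t _ y _ => ?_
    have h1 : HasDerivAt (fun y => t * y) t y := by simpa using (hasDerivAt_id y).const_mul t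
    have h2 := ((hd (t*y)).hasDerivAt.comp y h1).const_mul (t ^ k)
    have h3 : t ^ (k+1) * deriv φ (t * y) = t ^ k * (deriv φ (t * y) * t) := by ring
    rw [h3]; exact h2

private lemma contDiff_param (n : ℕ) : ∀ (φ : ℝ → ℝ), ContDiff ℝ (⊤ : ℕ∞) φ → ∀ k : ℕ,
    ContDiff ℝ n (fun y => ∫ t in (0:ℝ)..1, t ^ k * φ (t * y)) := by
  induction n with
  | zero =>
    intro φ hφ k
    exact contDiff_zero.mpr
      (Differentiable.continuous fun x => (hasDerivAt_param φ hφ k x).differentiableAt)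
  | succ n ih =>
    intro φ hφ k
    have hφ' : ContDiff ℝ (⊤ : ℕ∞) (deriv φ) := (contDiff_infty_iff_deriv.mp hφ).2
    rw [Nat.cast_succ, contDiff_succ_iff_deriv]
    refine ⟨fun x => (hasDerivAt_param φ hφ k x).differentiableAt, by simp, ?_⟩
    have : deriv (fun y => ∫ t in (0:ℝ)..1, t ^ k * φ (t * y)) =
        fun y => ∫ t in (0:ℝ)..1, t ^ (k+1) * deriv φ (t * y) :=
      funext fun x => (hasDerivAt_param φ hφ k x).deriv
    rw [this]; exact ih _ hφ' _

private lemma contDiff_dslope_zero {f : ℝ → ℝ} (hf : ContDiff ℝ (⊤ : ℕ∞) f) :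
    ContDiff ℝ (⊤ : ℕ∞) (dslope f 0) := by
  have hd : Differentiable ℝ f := hf.differentiable (by simp)
  have hφ : ContDiff ℝ (⊤ : ℕ∞) (deriv f) := (contDiff_infty_iff_deriv.mp hf).2
  have heq : dslope f 0 = fun y => ∫ t in (0:ℝ)..1, t ^ 0 * deriv f (t * y) := by
    funext y
    simp only [pow_zero, one_mul]
    rcases eq_or_ne y 0 with rfl | hy
    · simp [dslope_same]
    · rw [dslope_of_ne f hy, slope_def_field, intervalIntegral.integral_comp_mul_right (f := deriv f) hy,
        zero_mul, one_mul, intervalIntegral.integral_deriv_eq_sub (fun z _ => hd z)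
          ((hφ.continuous).intervalIntegrable _ _), smul_eq_mul, sub_zero]
      field_simp
  rw [heq]
  exact contDiff_infty.mpr fun n => contDiff_param n _ hφ 0

/-- If `g : ℝ → ℝ` is a smooth even function, then `g x - g 0 = x² · h x`
for some smooth even function `h : ℝ → ℝ`. -/
theorem even_smooth_sub_value_at_zero (g : ℝ → ℝ) (hg : ContDiff ℝ (⊤ : ℕ∞) g)
    (heven : ∀ x, g (-x) = g x) :
    ∃ h : ℝ → ℝ, ContDiff ℝ (⊤ : ℕ∞) h ∧ (∀ x, h (-x) = h x) ∧
      ∀ x, g x - g 0 = x ^ 2 * h x := by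
  have hga : ContDiff ℝ (⊤ : ℕ∞) g := hg
  have hderiv0 : deriv g 0 = 0 := by
    have h1 : deriv (fun y => g (-y)) 0 = deriv g 0 := by
      congr 1; funext y; exact heven y
    rw [deriv_comp_neg, neg_zero] at h1
    linarith
  set h : ℝ → ℝ := dslope (dslope g 0) 0 with hdef
  have hha : ContDiff ℝ (⊤ : ℕ∞) h :=
    contDiff_dslope_zero (contDiff_dslope_zero hga)
  have hid : ∀ x, g x - g 0 = x ^ 2 * h x := by
    intro x
    have e1 : (x - 0) • dslope (dslope g 0) 0 x = dslope g 0 x - dslope g 0 0 :=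
      sub_smul_dslope (dslope g 0) 0 x
    have e2 : (x - 0) • dslope g 0 x = g x - g 0 := sub_smul_dslope g 0 x
    have e3 : dslope g 0 0 = deriv g 0 := dslope_same g 0
    simp only [sub_zero, smul_eq_mul] at e1 e2
    rw [hdef]
    have e1' : x * dslope (dslope g 0) 0 x = dslope g 0 x := by
      rw [e1, e3, hderiv0, sub_zero]
    calc g x - g 0 = x * dslope g 0 x := e2.symm
      _ = x * (x * dslope (dslope g 0) 0 x) := by rw [e1']
      _ = x ^ 2 * dslope (dslope g 0) 0 x := by ring
  refine ⟨h, ?_, ?_, hid⟩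
  · exact hha
  · intro x
    rcases eq_or_ne x 0 with rfl | hx
    · rw [neg_zero]
    · have h1 := hid x
      have h2 := hid (-x)
      rw [heven x] at h2
      have hx2 : x ^ 2 ≠ 0 := pow_ne_zero 2 hx
      have : x ^ 2 * h (-x) = x ^ 2 * h x := by
        rw [show x ^ 2 * h (-x) = (-x) ^ 2 * h (-x) by ring, ← h2, h1]
      exact mul_left_cancel₀ hx2 this
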